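/- Let β = 1/2, ν > 0, α > 0, γ ≥ 0, t > 0, and ξ ∈ ℝ^d with |ξ| > 1. Then ∫_0^t (E_{1/2}(-ν u^{1/2} |ξ|^α (1+|ξ|^2)^(γ/2)))^2 du ≤ 2 ν^{-1} Γ(3/2) t^{1/2} 2^((α+γ)/2) (1/(1+|ξ|^2))^((α+γ)/2). -/

import Mathlib

/-!
For `x ≥ 0`, `E_{1/2}(-x) = e^{x²} erfc x = (2/√π) ∫₀^∞ e^{-2xs - s²} ds`. Dropping `e^{-2xs}` or
`e^{-s²}` gives `0 ≤ E_{1/2}(-x) ≤ 1` and `E_{1/2}(-x) ≤ 1/(√π x)`, hence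
`E_{1/2}(-x)² ≤ Γ(3/2)/x`. With `x = c √u` the integrand is dominated by `Γ(3/2) u^{-1/2} / c`,
whose integral over `[0, t]` is `2 Γ(3/2) √t / c`. Finally `|ξ|² ≥ (1 + |ξ|²)/2` for `|ξ| ≥ 1`
bounds `c = ν |ξ|^α (1 + |ξ|²)^{γ/2}` below by `ν ((1 + |ξ|²)/2)^{(α+γ)/2}`.
-/

open MeasureTheory Real

noncomputable def mittagLeffler (β x : ℝ) : ℝ :=
  ∑' j : ℕ, x ^ j / Real.Gamma (1 + β * j)

open Set Filter
open scoped Nat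

lemma integrableOn_pow_mul_exp_neg_sq (j : ℕ) :
    IntegrableOn (fun s : ℝ => s ^ j * exp (-s ^ 2)) (Ioi 0) := by
  simpa [rpow_natCast] using integrableOn_rpow_mul_exp_neg_rpow (p := 2) (s := j)
    (by linarith [j.cast_nonneg (α := ℝ)]) two_pos

lemma integral_pow_mul_exp_neg_sq (j : ℕ) :
    ∫ s in Ioi (0:ℝ), s ^ j * exp (-s ^ 2) = Gamma ((j + 1) / 2) / 2 := by
  have h := integral_rpow_mul_exp_neg_rpow (p := 2) (q := j) two_pos
    (by linarith [j.cast_nonneg (α := ℝ)])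
  simp only [rpow_natCast, rpow_ofNat] at h
  exact h.trans (one_div_mul_eq_div _ _)

lemma integrable_exp_two_mul_mul_sub_sq (z : ℝ) :
    Integrable fun s : ℝ => exp (2 * z * s - s ^ 2) := by
  refine (((integrable_exp_neg_mul_sq one_pos).comp_sub_right z).const_mul (exp (z ^ 2))).congr
    (Eventually.of_forall fun s => ?_)
  simp only [← exp_add]
  ring_nf

lemma Gamma_add_one_div_two_mul_Gamma_one_add_half_mul (j : ℕ) :
    Gamma ((j + 1) / 2) * Gamma (1 + 1 / 2 * j) = j ! * √π / 2 ^ j := by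
  have h := Gamma_mul_Gamma_add_half ((j + 1) / 2)
  rw [show ((j:ℝ) + 1) / 2 + 1 / 2 = 1 + 1 / 2 * j by ring,
    show 2 * (((j:ℝ) + 1) / 2) = j + 1 by ring, Gamma_nat_eq_factorial,
    show 1 - ((j:ℝ) + 1) = -j by ring, rpow_neg zero_le_two, rpow_natCast] at h
  rw [h, div_eq_mul_inv]; ring

/-- Expand `e^{2zs}` and integrate termwise: `∫₀^∞ sʲ e^{-s²} ds = Γ((j+1)/2)/2`, and Legendre
duplication turns `(2z)ʲ Γ((j+1)/2) / (2 j!)` into `(√π/2) zʲ / Γ(1 + j/2)`. -/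
theorem mittagLeffler_half_eq_integral (z : ℝ) :
    mittagLeffler (1 / 2) z = 2 / √π * ∫ s in Ioi (0:ℝ), exp (2 * z * s - s ^ 2) := by
  set F : ℕ → ℝ → ℝ := fun j s => (2 * z) ^ j / j ! * (s ^ j * exp (-s ^ 2))
  have hF_int (j : ℕ) : IntegrableOn (F j) (Ioi 0) :=
    (integrableOn_pow_mul_exp_neg_sq j).const_mul _
  have hF_tsum (s : ℝ) : ∑' j, F j s = exp (2 * z * s - s ^ 2) := by
    have hexp : HasSum (fun j : ℕ => (2 * z * s) ^ j / j !) (exp (2 * z * s)) := by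
      rw [exp_eq_exp_ℝ]; exact NormedSpace.expSeries_div_hasSum_exp _
    rw [sub_eq_add_neg, exp_add, ← (hexp.mul_right _).tsum_eq]
    congr 1; ext j; simp only [F]; ring
  have hF_integral (j : ℕ) : ∫ s in Ioi 0, F j s = √π / 2 * (z ^ j / Gamma (1 + 1 / 2 * j)) := by
    have hG := Gamma_add_one_div_two_mul_Gamma_one_add_half_mul j
    have hG0 : Gamma (1 + 1 / 2 * (j:ℝ)) ≠ 0 := (Gamma_pos_of_pos (by positivity)).ne'
    rw [integral_const_mul, integral_pow_mul_exp_neg_sq, eq_div_of_mul_eq hG0 hG]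
    field_simp
    ring
  have hF_sum : Summable fun j => ∫ s in Ioi 0, ‖F j s‖ := by
    have hbound (j : ℕ) : ∫ s in Ioi 0, ‖F j s‖
        ≤ (1 / 2) ^ j * ∫ s in Ioi (0:ℝ), exp (2 * |2 * z| * s - s ^ 2) := by
      rw [← integral_const_mul]
      refine integral_mono_of_nonneg (Eventually.of_forall fun _ => norm_nonneg _)
        ((integrable_exp_two_mul_mul_sub_sq |2 * z|).integrableOn.const_mul _) ?_
      filter_upwards [ae_restrict_mem measurableSet_Ioi] with s (hs : 0 < s)
      calc ‖F j s‖ = (1 / 2) ^ j * ((2 * |2 * z| * s) ^ j / j !) * exp (-s ^ 2) := by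
            simp only [F, norm_mul, norm_div, norm_pow, Real.norm_eq_abs, abs_of_pos hs, abs_exp,
              Nat.abs_cast, abs_mul, abs_two, mul_pow, div_pow, one_pow]
            field_simp
        _ ≤ (1 / 2) ^ j * exp (2 * |2 * z| * s) * exp (-s ^ 2) := by
            gcongr
            exact pow_div_factorial_le_exp _ (by positivity) j
        _ = (1 / 2) ^ j * exp (2 * |2 * z| * s - s ^ 2) := by
            rw [mul_assoc, ← exp_add, sub_eq_add_neg]
    exact Summable.of_nonneg_of_le (fun j => integral_nonneg fun _ => norm_nonneg _) hbound
      (summable_geometric_two.mul_right _)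
  calc mittagLeffler (1 / 2) z = 2 / √π * ∑' j, ∫ s in Ioi 0, F j s := by
        simp only [hF_integral, tsum_mul_left, ← mul_assoc]
        rw [div_mul_div_cancel₀ (by positivity), div_self two_ne_zero, one_mul]
        rfl
    _ = _ := by rw [integral_tsum_of_summable_integral_norm hF_int hF_sum]; simp only [hF_tsum]

lemma mittagLeffler_half_nonneg (z : ℝ) : 0 ≤ mittagLeffler (1 / 2) z := by
  rw [mittagLeffler_half_eq_integral]
  exact mul_nonneg (by positivity)
    (setIntegral_nonneg measurableSet_Ioi fun s _ => (exp_pos _).le)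

lemma mittagLeffler_half_neg_le_one {x : ℝ} (hx : 0 ≤ x) : mittagLeffler (1 / 2) (-x) ≤ 1 := by
  have hmono : ∫ s in Ioi (0:ℝ), exp (2 * -x * s - s ^ 2) ≤ ∫ s in Ioi (0:ℝ), exp (-1 * s ^ 2) :=
    integral_mono_of_nonneg (Eventually.of_forall fun _ => (exp_pos _).le)
      (integrable_exp_neg_mul_sq one_pos).integrableOn
      (by filter_upwards [ae_restrict_mem measurableSet_Ioi] with s (hs : 0 < s)
          gcongr; nlinarith)
  rw [integral_gaussian_Ioi, div_one] at hmono
  rw [mittagLeffler_half_eq_integral]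
  calc 2 / √π * ∫ s in Ioi (0:ℝ), exp (2 * -x * s - s ^ 2) ≤ 2 / √π * (√π / 2) := by gcongr
    _ = 1 := by field_simp

lemma mittagLeffler_half_neg_le_inv {x : ℝ} (hx : 0 < x) :
    mittagLeffler (1 / 2) (-x) ≤ (√π * x)⁻¹ := by
  have hmono : ∫ s in Ioi (0:ℝ), exp (2 * -x * s - s ^ 2) ≤ ∫ s in Ioi (0:ℝ), exp (2 * -x * s) :=
    integral_mono_of_nonneg (Eventually.of_forall fun _ => (exp_pos _).le)
      (integrableOn_exp_mul_Ioi (by linarith) 0)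
      (Eventually.of_forall fun s => exp_le_exp.mpr (sub_le_self _ (sq_nonneg s)))
  rw [integral_exp_mul_Ioi (by linarith), mul_zero, exp_zero] at hmono
  rw [mittagLeffler_half_eq_integral]
  calc 2 / √π * ∫ s in Ioi (0:ℝ), exp (2 * -x * s - s ^ 2) ≤ 2 / √π * (-1 / (2 * -x)) := by
        gcongr
    _ = (√π * x)⁻¹ := by field_simp

lemma Gamma_three_div_two : Gamma (3 / 2) = √π / 2 := by
  rw [show (3 / 2 : ℝ) = 1 / 2 + 1 by norm_num, Gamma_add_one (by norm_num), Gamma_one_half_eq]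
  ring

/-- `E² ≤ E ≤ 1/(√π x)`, and `1/√π ≤ √π/2 = Γ(3/2)` because `2 ≤ π`. -/
lemma mittagLeffler_half_neg_sq_le {x : ℝ} (hx : 0 < x) :
    mittagLeffler (1 / 2) (-x) ^ 2 ≤ Gamma (3 / 2) / x := by
  have hE := mittagLeffler_half_nonneg (-x)
  have hπ : (√π)⁻¹ ≤ √π / 2 := by
    rw [inv_le_iff_one_le_mul₀ (by positivity), div_mul_eq_mul_div,
      mul_self_sqrt pi_pos.le, one_le_div two_pos]
    linarith [pi_gt_three]
  calc mittagLeffler (1 / 2) (-x) ^ 2 ≤ 1 * mittagLeffler (1 / 2) (-x) := by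
        rw [sq]; gcongr; exact mittagLeffler_half_neg_le_one hx.le
    _ ≤ (√π * x)⁻¹ := by rw [one_mul]; exact mittagLeffler_half_neg_le_inv hx
    _ ≤ Gamma (3 / 2) / x := by
        rw [Gamma_three_div_two, mul_inv, div_eq_mul_inv]
        gcongr

lemma integral_mittagLeffler_half_sq_le {c t : ℝ} (hc : 0 < c) (ht : 0 ≤ t) :
    ∫ u in (0:ℝ)..t, mittagLeffler (1 / 2) (-(c * u ^ (1 / 2 : ℝ))) ^ 2
      ≤ 2 * Gamma (3 / 2) * t ^ (1 / 2 : ℝ) / c := by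
  have hdom : IntegrableOn (fun u : ℝ => Gamma (3 / 2) / c * u ^ (-(1 / 2) : ℝ)) (Ioc 0 t) :=
    ((intervalIntegral.intervalIntegrable_rpow' (by norm_num)).const_mul _).1
  calc ∫ u in (0:ℝ)..t, mittagLeffler (1 / 2) (-(c * u ^ (1 / 2 : ℝ))) ^ 2
      ≤ ∫ u in (0:ℝ)..t, Gamma (3 / 2) / c * u ^ (-(1 / 2) : ℝ) := by
        rw [intervalIntegral.integral_of_le ht, intervalIntegral.integral_of_le ht]
        refine integral_mono_of_nonneg (Eventually.of_forall fun _ => sq_nonneg _) hdom ?_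
        filter_upwards [ae_restrict_mem measurableSet_Ioc] with u (hu : u ∈ Ioc 0 t)
        calc _ ≤ Gamma (3 / 2) / (c * u ^ (1 / 2 : ℝ)) :=
              mittagLeffler_half_neg_sq_le (by have := hu.1; positivity)
          _ = Gamma (3 / 2) / c * u ^ (-(1 / 2) : ℝ) := by
              rw [rpow_neg hu.1.le, div_mul_eq_div_div, div_eq_mul_inv _ (u ^ _)]
    _ = 2 * Gamma (3 / 2) * t ^ (1 / 2 : ℝ) / c := by
        rw [intervalIntegral.integral_const_mul, integral_rpow (Or.inl (by norm_num))]
        norm_num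
        ring

lemma inv_rpow_mul_one_add_sq_rpow_le {N a b : ℝ} (hN : 1 ≤ N) (ha : 0 ≤ a) (hb : 0 ≤ b) :
    (N ^ a * (1 + N ^ 2) ^ (b / 2))⁻¹ ≤ 2 ^ ((a + b) / 2) * (1 / (1 + N ^ 2)) ^ ((a + b) / 2) := by
  have hM : 0 < (1 + N ^ 2) / 2 := by positivity
  have hM_le_sq : (1 + N ^ 2) / 2 ≤ N ^ 2 := by nlinarith
  have hM_le : (1 + N ^ 2) / 2 ≤ 1 + N ^ 2 := by nlinarith
  calc (N ^ a * (1 + N ^ 2) ^ (b / 2))⁻¹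
      ≤ (((1 + N ^ 2) / 2) ^ (a / 2) * ((1 + N ^ 2) / 2) ^ (b / 2))⁻¹ := by
        gcongr
        calc ((1 + N ^ 2) / 2) ^ (a / 2) ≤ (N ^ 2) ^ (a / 2) := by gcongr
          _ = N ^ a := by
            rw [← rpow_natCast, ← rpow_mul (by linarith)]
            norm_num [mul_div_cancel₀ a two_ne_zero]
    _ = 2 ^ ((a + b) / 2) * (1 / (1 + N ^ 2)) ^ ((a + b) / 2) := by
        rw [← rpow_add hM, ← add_div, ← inv_rpow hM.le, ← mul_rpow zero_le_two (by positivity)]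
        congr 1
        field_simp

theorem Nt_bound_critical_beta (d : ℕ) (ν α γ t : ℝ) (ξ : EuclideanSpace ℝ (Fin d))
    (hν : 0 < ν) (hα : 0 < α) (hγ : 0 ≤ γ) (ht : 0 < t) (hξ : 1 < ‖ξ‖) :
    ∫ u in (0:ℝ)..t,
        (mittagLeffler (1/2) (-(ν * u ^ ((1:ℝ)/2) * ‖ξ‖ ^ α * (1 + ‖ξ‖ ^ 2) ^ (γ / 2)))) ^ 2
      ≤ 2 * ν⁻¹ * Real.Gamma (3/2) * t ^ ((1:ℝ)/2) * 2 ^ ((α + γ) / 2)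
          * (1 / (1 + ‖ξ‖ ^ 2)) ^ ((α + γ) / 2) := by
  set N := ‖ξ‖
  set A := N ^ α * (1 + N ^ 2) ^ (γ / 2)
  have hN : 0 < N := by linarith
  have hA : 0 < A := by positivity
  have h_arg (u : ℝ) :
      ν * u ^ ((1:ℝ)/2) * N ^ α * (1 + N ^ 2) ^ (γ / 2) = ν * A * u ^ (1 / 2 : ℝ) := by
    ring
  simp only [h_arg]
  calc _ ≤ 2 * Gamma (3 / 2) * t ^ (1 / 2 : ℝ) / (ν * A) :=
        integral_mittagLeffler_half_sq_le (by positivity) ht.le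
    _ = 2 * ν⁻¹ * Gamma (3 / 2) * t ^ (1 / 2 : ℝ) * A⁻¹ := by field_simp
    _ ≤ _ := by
        rw [mul_assoc _ (2 ^ _)]
        gcongr
        exact inv_rpow_mul_one_add_sq_rpow_le hξ.le hα.le hγ
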